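/- arXiv:1203.0692 — 2 statements merged into one kernel-verified Lean document; each statement's English description precedes it below -/
import Mathlib

section
/- The map G_{f_0}(S,E) = (σ(S), F_{f_0}(S^0, E)) is continuous on the metric space (X, d). -/
/-- The phase space `X = ⟦1,N⟧^ℕ × 𝔹^N`: pairs of a strategy (a sequence with values
in `{1,…,N}`) and a boolean state vector indexed by `{1,…,N}`. -/
def XX (N : ℕ) : Type := (ℕ → Set.Icc 1 N) × (Set.Icc 1 N → Bool)

/-- The distance `d((S,E),(Š,Ě)) = Σ_{k=1}^{N} δ(E_k,Ě_k) + (9/N) Σ_{k=1}^{∞} |S^k-Š^k|/10^k`,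
where the `k`-th term (`k ≥ 1`) of a strategy `S : ℕ → ⟦1,N⟧` is `S (k-1)`. -/
noncomputable def dX {N : ℕ} (p q : XX N) : ℝ :=
  (∑ k : Set.Icc 1 N, if p.2 k = q.2 k then (0 : ℝ) else 1) +
    (9 / N) * ∑' k : ℕ, |((p.1 k : ℕ) : ℝ) - ((q.1 k : ℕ) : ℝ)| / 10 ^ (k + 1)

/-- The map `G_{f₀}(S,E) = (σ(S), F_{f₀}(S⁰,E))`, where `σ` is the shift and
`F_{f₀}(k,E)` negates exactly the coordinate `k` of `E` (vectorial boolean negation). -/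
def G {N : ℕ} (p : XX N) : XX N :=
  (fun n => p.1 (n + 1), fun j => if j = p.1 0 then !(p.2 j) else p.2 j)

/-!
Two points closer than `1` have the same state vector, and two points closer than `9/(10N)`
also have the same first strategy term, since a difference there already costs
`(9/N)·(1/10)`. For such points `G` acts on the same cell of the state vector and
shifts the strategies, which multiplies the strategy part of the distance by `10`
(its first term being `0`). Hence `d(G p, G q) = 10 d(p, q)` near `p`.
-/

namespace XX

variable {N : ℕ}

noncomputable def stateDist (E F : Set.Icc 1 N → Bool) : ℝ :=
  ∑ k, if E k = F k then (0 : ℝ) else 1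

noncomputable def strategyDist (S T : ℕ → Set.Icc 1 N) : ℝ :=
  ∑' k, |((S k : ℕ) : ℝ) - ((T k : ℕ) : ℝ)| / 10 ^ (k + 1)

lemma dX_eq (p q : XX N) : dX p q = stateDist p.2 q.2 + 9 / N * strategyDist p.1 q.1 := rfl

lemma stateDist_self (E : Set.Icc 1 N → Bool) : stateDist E E = 0 := by
  simp [stateDist]

lemma stateDist_nonneg (E F : Set.Icc 1 N → Bool) : 0 ≤ stateDist E F :=
  Finset.sum_nonneg fun _ _ => by split_ifs <;> norm_num

lemma eq_of_stateDist_lt_one {E F : Set.Icc 1 N → Bool} (h : stateDist E F < 1) : E = F := by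
  funext j
  by_contra hj
  have hj_le : (if E j = F j then (0 : ℝ) else 1) ≤ stateDist E F :=
    Finset.single_le_sum (f := fun k => if E k = F k then (0 : ℝ) else 1)
      (fun _ _ => by split_ifs <;> norm_num) (Finset.mem_univ j)
  rw [if_neg hj] at hj_le
  linarith

lemma summable_strategyDist (S T : ℕ → Set.Icc 1 N) :
    Summable fun k => |((S k : ℕ) : ℝ) - ((T k : ℕ) : ℝ)| / 10 ^ (k + 1) := by
  have hgeo : Summable fun k : ℕ => (N : ℝ) / 10 * (1 / 10) ^ k :=
    (summable_geometric_of_lt_one (by norm_num) (by norm_num)).mul_left _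
  refine hgeo.of_nonneg_of_le (fun k => by positivity) fun k => ?_
  have hdiff : |((S k : ℕ) : ℝ) - ((T k : ℕ) : ℝ)| ≤ N :=
    abs_sub_le_of_nonneg_of_le (Nat.cast_nonneg _) (by exact_mod_cast (S k).2.2)
      (Nat.cast_nonneg _) (by exact_mod_cast (T k).2.2)
  calc |((S k : ℕ) : ℝ) - ((T k : ℕ) : ℝ)| / 10 ^ (k + 1) ≤ N / 10 ^ (k + 1) := by gcongr
    _ = N / 10 * (1 / 10) ^ k := by rw [pow_succ, one_div_pow]; ring

lemma strategyDist_nonneg (S T : ℕ → Set.Icc 1 N) : 0 ≤ strategyDist S T :=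
  tsum_nonneg fun _ => by positivity

lemma one_div_ten_le_strategyDist {S T : ℕ → Set.Icc 1 N} (h : S 0 ≠ T 0) :
    1 / 10 ≤ strategyDist S T := by
  have hne : ((S 0 : ℕ) : ℤ) - ((T 0 : ℕ) : ℤ) ≠ 0 :=
    sub_ne_zero.mpr fun h' => h (Subtype.ext (by exact_mod_cast h'))
  have hone : (1 : ℝ) ≤ |((S 0 : ℕ) : ℝ) - ((T 0 : ℕ) : ℝ)| := by
    exact_mod_cast Int.one_le_abs hne
  calc (1 : ℝ) / 10 ≤ |((S 0 : ℕ) : ℝ) - ((T 0 : ℕ) : ℝ)| / 10 ^ (0 + 1) := by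
        rw [zero_add, pow_one]; gcongr
    _ ≤ strategyDist S T :=
        (summable_strategyDist S T).le_tsum 0 fun _ _ => by positivity

lemma strategyDist_shift {S T : ℕ → Set.Icc 1 N} (h : S 0 = T 0) :
    strategyDist (fun n => S (n + 1)) (fun n => T (n + 1)) = 10 * strategyDist S T := by
  rw [strategyDist, strategyDist, (summable_strategyDist S T).tsum_eq_zero_add, h, sub_self,
    abs_zero, zero_div, zero_add, ← tsum_mul_left]
  congr 1
  funext k
  rw [pow_succ (10 : ℝ) (k + 1)]
  field_simp

lemma eq_snd_of_dX_lt_one {p q : XX N} (h : dX p q < 1) : p.2 = q.2 := by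
  refine eq_of_stateDist_lt_one (lt_of_le_of_lt ?_ h)
  rw [dX_eq]
  have := strategyDist_nonneg p.1 q.1
  linarith [mul_nonneg (by positivity : (0 : ℝ) ≤ 9 / N) this]

lemma fst_zero_eq_of_dX_lt {p q : XX N} (h : dX p q < 9 / (10 * N)) : p.1 0 = q.1 0 := by
  by_contra hne
  have hfar : 9 / N * (1 / 10) ≤ 9 / N * strategyDist p.1 q.1 :=
    mul_le_mul_of_nonneg_left (one_div_ten_le_strategyDist hne) (by positivity)
  have hsplit : 9 / N * (1 / 10) = (9 / (10 * N) : ℝ) := by rw [mul_comm 10, div_mul_div_comm]; simp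
  rw [dX_eq] at h
  linarith [stateDist_nonneg p.2 q.2]

lemma dX_G_eq {p q : XX N} (hE : p.2 = q.2) (hS : p.1 0 = q.1 0) :
    dX (G p) (G q) = 10 * dX p q := by
  have hGE : (G p).2 = (G q).2 := by
    funext j
    simp only [G, hE, hS]
  rw [dX_eq, dX_eq, hGE, hE, stateDist_self, stateDist_self]
  simp only [G, strategyDist_shift hS]
  ring

end XX

open XX in
theorem G_continuous_general (N : ℕ) :
    ∀ p : XX N, ∀ ε > (0 : ℝ), ∃ δ > (0 : ℝ),
      ∀ q : XX N, dX p q < δ → dX (G p) (G q) < ε := by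
  intro p ε hε
  have hN : (0 : ℝ) < N := by exact_mod_cast (p.1 0).2.1.trans (p.1 0).2.2
  refine ⟨min (min 1 (9 / (10 * N))) (ε / 10), by positivity, fun q hq => ?_⟩
  have hq₁ : dX p q < 1 := hq.trans_le ((min_le_left _ _).trans (min_le_left _ _))
  have hq₂ : dX p q < 9 / (10 * N) := hq.trans_le ((min_le_left _ _).trans (min_le_right _ _))
  have hq₃ : dX p q < ε / 10 := hq.trans_le (min_le_right _ _)
  rw [dX_G_eq (eq_snd_of_dX_lt_one hq₁) (fst_zero_eq_of_dX_lt hq₂)]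
  linarith

/-- `G_{f₀}` is continuous on the metric space `(X, d)`. -/
theorem G_continuous (N : ℕ) (hN : 1 ≤ N) :
    ∀ p : XX N, ∀ ε > (0 : ℝ), ∃ δ > (0 : ℝ),
      ∀ q : XX N, dX p q < δ → dX (G p) (G q) < ε :=
  G_continuous_general N
end

section
/- The dynamical system (X, G_{f_0}) is topologically transitive: for any nonempty open sets U, V in (X,d), there exists n ∈ ℕ such that G_{f_0}^n(U) ∩ V ≠ ∅. -/
/-
Take `(S, E) ∈ U` and `(S', E') ∈ V`. Two points with the same state whose strategies agree on
their first `m` terms are at distance at most `10⁻ᵐ`, so for `m` large enough the point `(T, E)`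
lies in `U` as soon as `T` begins with the first `m` terms of `S`. After these `m` steps, let `T`
play once each coordinate where the current state differs from `E'`, say in `c` steps, and then
continue with `S'`: then `G^[m + c] (T, E) = (S', E')`.
-/

lemma tsum_le_of_le_geometric_of_eq_zero {r C : ℝ} (hr₀ : 0 ≤ r) (hr₁ : r < 1) {g : ℕ → ℝ}
    {m : ℕ} (hg : ∀ k, 0 ≤ g k) (hle : ∀ k, g k ≤ C * r ^ k) (hzero : ∀ k < m, g k = 0) :
    ∑' k, g k ≤ C * r ^ m / (1 - r) := by
  have hgeom : Summable (fun k => r ^ k) := summable_geometric_of_lt_one hr₀ hr₁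
  have hsum : Summable g := Summable.of_nonneg_of_le hg hle (hgeom.mul_left C)
  rw [← hsum.sum_add_tsum_nat_add m,
    Finset.sum_eq_zero fun k hk => hzero k (Finset.mem_range.mp hk), zero_add]
  calc ∑' k, g (k + m) ≤ ∑' k, C * r ^ m * r ^ k :=
        ((summable_nat_add_iff m).mpr hsum).tsum_le_tsum
          (fun k => by rw [mul_assoc, ← pow_add, add_comm m]; exact hle (k + m))
          (hgeom.mul_left _)
    _ = C * r ^ m / (1 - r) := by
        rw [tsum_mul_left, tsum_geometric_of_lt_one hr₀ hr₁, div_eq_mul_inv]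

section Evolution

variable {ι : Type*} [DecidableEq ι]

def flipAt (i : ι) (E : ι → Bool) : ι → Bool := fun j => if j = i then !E j else E j

def evolve (S : ℕ → ι) (E : ι → Bool) : ℕ → ι → Bool
  | 0 => E
  | n + 1 => flipAt (S n) (evolve S E n)

lemma evolve_congr {S T : ℕ → ι} (E : ι → Bool) {n : ℕ} (h : ∀ i < n, S i = T i) :
    evolve S E n = evolve T E n := by
  induction n with
  | zero => rfl
  | succ n ih => simp only [evolve, ih fun i hi => h i (by omega), h n n.lt_succ_self]

lemma evolve_add (S : ℕ → ι) (E : ι → Bool) (a b : ℕ) :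
    evolve S E (a + b) = evolve (fun i => S (a + i)) (evolve S E a) b := by
  induction b with
  | zero => rfl
  | succ b ih => rw [← add_assoc, evolve, evolve, ih]

lemma evolve_succ' (S : ℕ → ι) (E : ι → Bool) (n : ℕ) :
    evolve S E (n + 1) = evolve (fun i => S (i + 1)) (flipAt (S 0) E) n := by
  rw [add_comm n, evolve_add]
  congr 1
  funext i
  rw [add_comm]

lemma evolve_getD_length {l : List ι} (hl : l.Nodup) (d : ι) (E : ι → Bool) :
    evolve (fun i => l.getD i d) E l.length = fun j => if j ∈ l then !E j else E j := by
  induction l generalizing E with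
  | nil => funext j; simp [evolve]
  | cons a t ih =>
    obtain ⟨hat, ht⟩ := List.nodup_cons.mp hl
    rw [List.length_cons, evolve_succ']
    refine (ih ht _).trans (funext fun j => ?_)
    by_cases hja : j = a
    · subst hja; simp [flipAt, hat]
    · simp [flipAt, hja]

lemma exists_evolve_eq [Fintype ι] (d : ι) (E E' : ι → Bool) :
    ∃ (c : ℕ) (w : ℕ → ι), evolve w E c = E' := by
  let l := (Finset.univ.filter fun j => E j ≠ E' j).toList
  refine ⟨l.length, fun i => l.getD i d, ?_⟩
  rw [evolve_getD_length (Finset.nodup_toList _)]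
  funext j
  by_cases h : E j = E' j <;> simp [h, Bool.eq_not_iff]

end Evolution

section Splice

variable {α : Type*}

def prepend (u : ℕ → α) (n : ℕ) (v : ℕ → α) : ℕ → α := fun i => if i < n then u i else v (i - n)

lemma prepend_of_lt {u v : ℕ → α} {n i : ℕ} (h : i < n) : prepend u n v i = u i := if_pos h

lemma prepend_add (u v : ℕ → α) (n k : ℕ) : prepend u n v (n + k) = v k := by
  simp [prepend]

end Splice

variable {N : ℕ}

lemma iterate_G (p : XX N) (n : ℕ) : G^[n] p = (fun k => p.1 (n + k), evolve p.1 p.2 n) := by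
  induction n with
  | zero => simp only [Nat.zero_add]; rfl
  | succ n ih =>
    rw [Function.iterate_succ_apply', ih]
    simp only [G, Nat.add_zero, ← add_assoc, add_right_comm n 1]
    rfl

lemma iterate_G_prepend (p : XX N) (w S' : ℕ → Set.Icc 1 N) (m c : ℕ) :
    G^[m + c] ((prepend p.1 m (prepend w c S'), p.2) : XX N) =
      ((S', evolve w (evolve p.1 p.2 m) c) : XX N) := by
  refine (iterate_G _ _).trans (Prod.ext (funext fun k => ?_) ?_)
  · change prepend p.1 m (prepend w c S') (m + c + k) = S' k
    rw [add_assoc, prepend_add, prepend_add]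
  · dsimp only
    rw [evolve_add, evolve_congr _ fun i hi => prepend_of_lt hi]
    simp only [prepend_add]
    exact evolve_congr _ fun i hi => prepend_of_lt hi

lemma dX_self (p : XX N) : dX p p = 0 := by
  simp [dX]

lemma dX_le_one_div_ten_pow {p q : XX N} {m : ℕ} (h : ∀ k < m, p.1 k = q.1 k) (hE : p.2 = q.2) :
    dX p q ≤ (1 / 10) ^ m := by
  have hN : (1 : ℝ) ≤ N := by exact_mod_cast (p.1 0).2.1.trans (p.1 0).2.2
  have hterm : ∀ k,
      |((p.1 k : ℕ) : ℝ) - ((q.1 k : ℕ) : ℝ)| / 10 ^ (k + 1) ≤ N / 10 * (1 / 10) ^ k := by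
    intro k
    have hdiff : |((p.1 k : ℕ) : ℝ) - ((q.1 k : ℕ) : ℝ)| ≤ N :=
      abs_sub_le_of_nonneg_of_le (by positivity) (by exact_mod_cast (p.1 k).2.2)
        (by positivity) (by exact_mod_cast (q.1 k).2.2)
    calc |((p.1 k : ℕ) : ℝ) - ((q.1 k : ℕ) : ℝ)| / 10 ^ (k + 1) ≤ N / 10 ^ (k + 1) := by gcongr
      _ = N / 10 * (1 / 10) ^ k := by rw [pow_succ, one_div_pow]; field_simp
  have htail := tsum_le_of_le_geometric_of_eq_zero (by norm_num) (by norm_num)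
    (fun k => by positivity) hterm (m := m) fun k hk => by rw [h k hk, sub_self]; simp
  simp only [dX, hE, if_true, Finset.sum_const_zero, zero_add]
  calc 9 / N * ∑' k, |((p.1 k : ℕ) : ℝ) - ((q.1 k : ℕ) : ℝ)| / 10 ^ (k + 1)
      ≤ 9 / N * (N / 10 * (1 / 10) ^ m / (1 - 1 / 10)) := by gcongr
    _ = (1 / 10) ^ m := by field_simp; norm_num

theorem G_transitive_general (N : ℕ) (U V : Set (XX N))
    (hU : ∀ x ∈ U, ∃ ε > (0 : ℝ), ∀ y, dX x y < ε → y ∈ U)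
    (hV : ∀ x ∈ V, ∃ ε > (0 : ℝ), ∀ y, dX x y < ε → y ∈ V)
    (hUne : U.Nonempty) (hVne : V.Nonempty) :
    ∃ n : ℕ, ∃ x ∈ U, G^[n] x ∈ V := by
  obtain ⟨p, hp⟩ := hUne
  obtain ⟨q, hq⟩ := hVne
  obtain ⟨ε, hε, hUball⟩ := hU p hp
  obtain ⟨ε', hε', hVball⟩ := hV q hq
  obtain ⟨m, hm⟩ := exists_pow_lt_of_lt_one hε (by norm_num : (1 / 10 : ℝ) < 1)
  obtain ⟨c, w, hw⟩ := exists_evolve_eq (p.1 0) (evolve p.1 p.2 m) q.2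
  let x : XX N := (prepend p.1 m (prepend w c q.1), p.2)
  refine ⟨m + c, x, hUball x ?_, ?_⟩
  · exact (dX_le_one_div_ten_pow (q := x) (fun k hk => (prepend_of_lt hk).symm) rfl).trans_lt hm
  · rw [iterate_G_prepend, hw]
    exact hVball q (by rw [dX_self]; exact hε')

/-- The dynamical system `(X, G_{f₀})` is topologically transitive: for all nonempty
open sets `U, V` of `(X,d)`, some iterate of `U` under `G_{f₀}` meets `V`. -/
theorem G_transitive (N : ℕ) (hN : 1 ≤ N) (U V : Set (XX N))
    (hU : ∀ x ∈ U, ∃ ε > (0 : ℝ), ∀ y, dX x y < ε → y ∈ U)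
    (hV : ∀ x ∈ V, ∃ ε > (0 : ℝ), ∀ y, dX x y < ε → y ∈ V)
    (hUne : U.Nonempty) (hVne : V.Nonempty) :
    ∃ n : ℕ, ∃ x ∈ U, G^[n] x ∈ V :=
  G_transitive_general N U V hU hV hUne hVne
end
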